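/- arXiv:2111.12479 — 3 statements merged into one kernel-verified Lean document; each statement's English description precedes it below -/
import Mathlib

section
/- For all ω > 0, each of the three functions φ₀₁(t) = (cosh(ω(1-t)) - 1)/(cosh(ω) - 1), φ₁₁(t) = (cosh(ω) - cosh(ωt) - cosh(ω(1-t)) + 1)/(cosh(ω) - 1), φ₂₁(t) = (cosh(ωt) - 1)/(cosh(ω) - 1) is nonnegative for all t ∈ [0,1]. -/
open Real

namespace Real

theorem sinh_mul_sinh_nonneg {a b : ℝ} (hab : 0 ≤ a * b) : 0 ≤ sinh a * sinh b := by
  rcases mul_nonneg_iff.mp hab with ⟨ha, hb⟩ | ⟨ha, hb⟩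
  · exact mul_nonneg (sinh_nonneg_iff.mpr ha) (sinh_nonneg_iff.mpr hb)
  · exact mul_nonneg_of_nonpos_of_nonpos (sinh_nonpos_iff.mpr ha) (sinh_nonpos_iff.mpr hb)

/-- The gap is `sinh a sinh b + (cosh a - 1)(cosh b - 1)`. -/
theorem cosh_add_cosh_le_cosh_add_add_one {a b : ℝ} (hab : 0 ≤ a * b) :
    cosh a + cosh b ≤ cosh (a + b) + 1 := by
  have hprod : 0 ≤ (cosh a - 1) * (cosh b - 1) :=
    mul_nonneg (sub_nonneg.mpr (one_le_cosh a)) (sub_nonneg.mpr (one_le_cosh b))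
  rw [cosh_add]
  nlinarith [sinh_mul_sinh_nonneg hab]

end Real

theorem phi_nonneg_general (ω t : ℝ) (ht : t ∈ Set.Icc (0:ℝ) 1) :
    0 ≤ (Real.cosh (ω * (1 - t)) - 1) / (Real.cosh ω - 1) ∧
    0 ≤ (Real.cosh ω - Real.cosh (ω * t) - Real.cosh (ω * (1 - t)) + 1) / (Real.cosh ω - 1) ∧
    0 ≤ (Real.cosh (ω * t) - 1) / (Real.cosh ω - 1) := by
  obtain ⟨ht0, ht1⟩ := ht
  have hden : 0 ≤ cosh ω - 1 := sub_nonneg.mpr (one_le_cosh ω)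
  have hprod : 0 ≤ ω * t * (ω * (1 - t)) := by
    have : ω * t * (ω * (1 - t)) = ω ^ 2 * (t * (1 - t)) := by ring
    rw [this]
    exact mul_nonneg (sq_nonneg ω) (mul_nonneg ht0 (sub_nonneg.mpr ht1))
  have key := cosh_add_cosh_le_cosh_add_add_one hprod
  rw [show ω * t + ω * (1 - t) = ω by ring] at key
  refine ⟨div_nonneg ?_ hden, div_nonneg (by linarith) hden, div_nonneg ?_ hden⟩ <;>
    exact sub_nonneg.mpr (one_le_cosh _)

theorem phi_nonneg (ω t : ℝ) (hω : 0 < ω) (ht : t ∈ Set.Icc (0:ℝ) 1) :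
    0 ≤ (Real.cosh (ω * (1 - t)) - 1) / (Real.cosh ω - 1) ∧
    0 ≤ (Real.cosh ω - Real.cosh (ω * t) - Real.cosh (ω * (1 - t)) + 1) / (Real.cosh ω - 1) ∧
    0 ≤ (Real.cosh (ω * t) - 1) / (Real.cosh ω - 1) :=
  phi_nonneg_general ω t ht
end

section
/- For all ω > 0 and t ∈ ℝ, the four functions φ₀₁(t) = (sinh(ω(1-t)) - ω(1-t))/(sinh(ω) - ω), φ₃₁(t) = (sinh(ωt) - ωt)/(sinh(ω) - ω), together with the middle two functions φ₁₁(t) and φ₂₁(t) defined as in the paper, sum to 1 (partition of unity of the normalized B-basis of span{1, t, e^{ωt}, e^{-ωt}}). -/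
open Real

lemma sinh_lt_self_mul_cosh {x : ℝ} (hx : 0 < x) : Real.sinh x < x * Real.cosh x := by
  have hmono : StrictMonoOn (fun y : ℝ => y * Real.cosh y - Real.sinh y) (Set.Ici 0) := by
    refine strictMonoOn_of_deriv_pos (convex_Ici _) ?_ ?_
    · exact ((continuous_id.mul Real.continuous_cosh).sub Real.continuous_sinh).continuousOn
    · intro y hy
      rw [interior_Ici, Set.mem_Ioi] at hy
      have hd : HasDerivAt (fun y : ℝ => y * Real.cosh y - Real.sinh y) (y * Real.sinh y) y := by
        have h1 := (hasDerivAt_id y).mul (Real.hasDerivAt_cosh y)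
        have h2 := Real.hasDerivAt_sinh y
        have h3 := h1.sub h2
        exact h3.congr_deriv (by simp)
      rw [hd.deriv]
      exact mul_pos hy (Real.sinh_pos_iff.mpr hy)
  have := hmono (Set.self_mem_Ici) (Set.mem_Ici.mpr hx.le) hx
  simpa using this

theorem phi_EP1_partition_of_unity (ω t : ℝ) (hω : 0 < ω) :
    (Real.sinh (ω * (1 - t)) - ω * (1 - t)) / (Real.sinh ω - ω) +
      (-(ω * t) - ω * (1 - t) * Real.cosh ω + ω * Real.cosh (ω * (1 - t)) +
          Real.sinh ω - Real.sinh (ω * t) - Real.sinh (ω * (1 - t))) /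
        ((ω * (Real.cosh (ω / 2) / Real.sinh (ω / 2)) - 2) * (ω - Real.sinh ω)) +
      (-(ω * (1 - t)) - ω * t * Real.cosh ω + ω * Real.cosh (ω * t) +
          Real.sinh ω - Real.sinh (ω * (1 - t)) - Real.sinh (ω * t)) /
        ((ω * (Real.cosh (ω / 2) / Real.sinh (ω / 2)) - 2) * (ω - Real.sinh ω)) +
      (Real.sinh (ω * t) - ω * t) / (Real.sinh ω - ω) = 1 := by
  have hS : ω < Real.sinh ω := Real.self_lt_sinh_iff.mpr hω
  have hh : 0 < ω / 2 := by linarith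
  have hshp : 0 < Real.sinh (ω / 2) := Real.sinh_pos_iff.mpr hh
  have hlt : Real.sinh (ω / 2) < (ω / 2) * Real.cosh (ω / 2) := sinh_lt_self_mul_cosh hh
  have hS2 : Real.sinh ω = 2 * Real.sinh (ω / 2) * Real.cosh (ω / 2) := by
    have := Real.sinh_two_mul (ω / 2)
    rwa [show 2 * (ω / 2) = ω by ring] at this
  have hC2 : Real.cosh ω = Real.cosh (ω / 2) ^ 2 + Real.sinh (ω / 2) ^ 2 := by
    have := Real.cosh_two_mul (ω / 2)
    rwa [show 2 * (ω / 2) = ω by ring] at this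
  have hsub : ω * (1 - t) = ω - ω * t := by ring
  have hsq : Real.cosh (ω / 2) ^ 2 - Real.sinh (ω / 2) ^ 2 = 1 :=
    Real.cosh_sq_sub_sinh_sq (ω / 2)
  set s := Real.sinh (ω / 2) with hs_def
  set c := Real.cosh (ω / 2) with hc_def
  have hs : s ≠ 0 := ne_of_gt hshp
  have hQ1 : ω * c - 2 * s ≠ 0 := by
    have : 0 < ω * c - 2 * s := by nlinarith [hlt]
    exact ne_of_gt this
  have hA : 2 * s * c - ω ≠ 0 := by
    rw [← hS2]; exact sub_ne_zero.mpr (ne_of_gt hS)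
  have hA' : ω - 2 * s * c ≠ 0 := by
    rw [← hS2]; exact sub_ne_zero.mpr (ne_of_lt hS)
  have heq : ω * (c / s) - 2 = (ω * c - 2 * s) / s := by
    field_simp
  have hd2 : ω * (c / s) - 2 ≠ 0 := by
    rw [heq]
    exact div_ne_zero hQ1 hs
  rw [hsub, Real.sinh_sub, Real.cosh_sub, hS2, hC2]
  set u := Real.sinh (ω * t) with hu_def
  set v := Real.cosh (ω * t) with hv_def
  trans ((2 * s * c - ω) * (ω * c - 2 * s) +
      (ω * s * v - ω * c * u - ω * s) * (c ^ 2 - s ^ 2 - 1)) /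
      ((2 * s * c - ω) * (ω * c - 2 * s))
  · rw [heq, div_mul_eq_mul_div]
    rw [div_div_eq_mul_div, div_div_eq_mul_div]
    field_simp [hQ1, hA, hA', hs, (by rw [mul_comm]; exact hQ1 : c * ω - 2 * s ≠ 0)]
    ring
  · rw [show c ^ 2 - s ^ 2 - 1 = 0 by linarith [hsq]]
    rw [mul_zero, add_zero, div_self (mul_ne_zero hA hQ1)]
end

section
/- For ω > 0, g₀(ω) = 3ω + sinh(ω)(cosh(ω) - 4) is nonzero; in fact g₀(ω) > 0 for all ω > 0. -/
open Real

theorem g0_pos (ω : ℝ) (hω : 0 < ω) :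
    3 * ω + Real.sinh ω * (Real.cosh ω - 4) ≠ 0 ∧
    0 < 3 * ω + Real.sinh ω * (Real.cosh ω - 4) := by
  set f : ℝ → ℝ := fun x => 3 * x + Real.sinh x * (Real.cosh x - 4) with hf
  have hderiv : ∀ x : ℝ, HasDerivAt f (2 * (Real.cosh x - 1) ^ 2) x := by
    intro x
    have h1 := (Real.hasDerivAt_sinh x).mul ((Real.hasDerivAt_cosh x).sub_const 4)
    have h2 := ((hasDerivAt_id x).const_mul 3).add h1
    convert h2 using 1
    have hc := Real.cosh_sq x
    · rfl
    · rfl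
    · rfl
    · linear_combination Real.cosh_sq x
  have hmono : StrictMonoOn f (Set.Ici (0:ℝ)) := by
    apply strictMonoOn_of_deriv_pos (convex_Ici 0)
    · exact (Continuous.continuousOn (by fun_prop))
    · intro x hx
      rw [interior_Ici] at hx
      rw [(hderiv x).deriv]
      have h1 : 1 < Real.cosh x := Real.one_lt_cosh.mpr (ne_of_gt hx)
      have : 0 < (Real.cosh x - 1) ^ 2 := pow_pos (by linarith) 2
      linarith
  have h0 : f 0 = 0 := by simp [hf]
  have := hmono (Set.self_mem_Ici) (Set.mem_Ici.mpr hω.le) hω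
  rw [h0] at this
  exact ⟨ne_of_gt this, this⟩
end
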